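/- Let M be a closed subset of a real normed space X and S, T : M → M self-mappings with M = S(M). Suppose M has a contractive jointly continuous family ℑ = {f_x : x ∈ M} with contractiveness function Φ : (0,1) → (0,1), the pair (S,T) is a generalized JHℑ-suboperator pair with order n₀ for some n₀ ∈ ℕ, and for all x, y ∈ M and all t ∈ (0,1), ψ(∫₀^{‖Tx−Ty‖} φ(s)ds) ≤ F(ψ(∫₀^{(1/Φ(t))γ(m₄(x,y))} φ(s)ds), φᵤ(∫₀^{(1/Φ(t))γ(m₄(x,y))} φ(s)ds)), where ψ is an altering distance function, φᵤ is an ultra altering distance function, F is a C-class function, and the triple (ψ, φᵤ, F) is monotone. If cl(T(M)) is compact and S and T are continuous, then M ∩ Fix(S) ∩ Fix(T) ≠ ∅. -/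

import Mathlib

/-! For each `k ∈ (0,1)` the contractive condition allows at most one point of coincidence of
`S` and `T_k = f_{T·}(k)`: two distinct ones `w₁ ≠ w₂` would give `m₄ = ‖w₁ - w₂‖`, and then
`(1/Φ(k)) γ(m₄) < ‖w₁ - w₂‖ / Φ(k) ≤ ‖Tx₁ - Tx₂‖` contradicts the C-class inequality. With
`δ(PC) = 0` the JHℑ-suboperator condition turns the coincidence point into a common fixed point
`x_k` of `S` and `T_k`. Letting `k → 1` along a sequence, compactness of `cl T(M)` gives
`T x_k → y` along a subsequence, joint continuity of the family gives
`x_k = f_{Tx_k}(k) → f_y(1) = y`, and continuity of `S` and `T` makes `y` a common fixed point. -/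

open MeasureTheory Filter Topology Set

noncomputable section

/-- The integral `∫₀^a φ(t) dt`. -/
def intPhi (phi : ℝ → ℝ) (a : ℝ) : ℝ := ∫ t in (0:ℝ)..a, phi t

/-- `φ : [0,∞) → [0,∞)` is Lebesgue integrable, summable, nonnegative, with
`∫₀^ε φ(t)dt > 0` for all `ε > 0`. -/
def PhiAdmissible (phi : ℝ → ℝ) : Prop :=
  (∀ t ≥ (0:ℝ), 0 ≤ phi t) ∧ (∀ b : ℝ, IntervalIntegrable phi volume 0 b) ∧
  ∀ ε > (0:ℝ), 0 < intPhi phi ε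

/-- Altering distance function: nondecreasing, continuous, `ψ t = 0 ↔ t = 0` on `[0,∞)`. -/
def AlteringDistance (ψ : ℝ → ℝ) : Prop :=
  MonotoneOn ψ (Ici 0) ∧ ContinuousOn ψ (Ici 0) ∧ ∀ t ≥ (0:ℝ), (ψ t = 0 ↔ t = 0)

/-- Ultra altering distance function: continuous, nondecreasing, positive on `(0,∞)`,
nonnegative at `0`. -/
def UltraAltering (φu : ℝ → ℝ) : Prop :=
  ContinuousOn φu (Ici 0) ∧ MonotoneOn φu (Ici 0) ∧ (∀ t > (0:ℝ), 0 < φu t) ∧ 0 ≤ φu 0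

/-- C-class function: continuous on `[0,∞)²`, `F s t ≤ s`, and `F s t = s → s = 0 ∨ t = 0`. -/
def CClassFun (F : ℝ → ℝ → ℝ) : Prop :=
  ContinuousOn (Function.uncurry F) (Ici 0 ×ˢ Ici 0) ∧
  (∀ s ≥ (0:ℝ), ∀ t ≥ (0:ℝ), F s t ≤ s) ∧
  (∀ s ≥ (0:ℝ), ∀ t ≥ (0:ℝ), F s t = s → s = 0 ∨ t = 0)

/-- The triple `(ψ, φᵤ, F)` is monotone. -/
def MonotoneTriple (ψ φu : ℝ → ℝ) (F : ℝ → ℝ → ℝ) : Prop :=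
  ∀ x y : ℝ, 0 ≤ x → x ≤ y → F (ψ x) (φu x) ≤ F (ψ y) (φu y)

/-- The triple `(ψ, φᵤ, F)` is strictly monotone. -/
def StrictMonotoneTriple (ψ φu : ℝ → ℝ) (F : ℝ → ℝ → ℝ) : Prop :=
  ∀ x y : ℝ, 0 ≤ x → x < y → F (ψ x) (φu x) < F (ψ y) (φu y)

/-- `γ : (0,∞) → (0,∞)` is nondecreasing with `γ t < t` for all `t > 0`. -/
def GammaAdmissible (γ : ℝ → ℝ) : Prop :=
  (∀ t > (0:ℝ), 0 < γ t) ∧ MonotoneOn γ (Ioi 0) ∧ ∀ t > (0:ℝ), γ t < t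

variable {X : Type*} [NormedAddCommGroup X] [NormedSpace ℝ X]

/-- Fixed points of `T` lying in `M`. -/
def FixOn (T : X → X) (M : Set X) : Set X := {x ∈ M | T x = x}

/-- Points of coincidence `PC(S,T)` of the pair `(S,T)` over the set `M`. -/
def PCset (S T : X → X) (M : Set X) : Set X := {w | ∃ x ∈ M, S x = w ∧ T x = w}

/-- `(S,T)` is a generalized JH-operator pair with order `n` on `M`:
there is `x ∈ M` and `w = Sx = Tx ∈ PC(S,T)` with `‖w - x‖ ≤ (δ(PC(S,T)))ⁿ`. -/
def GenJHOp (S T : X → X) (M : Set X) (n : ℕ) : Prop :=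
  ∃ x ∈ M, S x = T x ∧ ‖S x - x‖ ≤ Metric.diam (PCset S T M) ^ n

/-- `(S,T)` is a generalized JH-suboperator pair with order `n` on `M` (w.r.t. `q`):
for each `k ∈ [0,1]`, `(S, T_k)` with `T_k x = (1-k)q + kTx` is a generalized JH-operator
pair with order `n`. -/
def GenJHSubOp (S T : X → X) (M : Set X) (q : X) (n : ℕ) : Prop :=
  ∀ k ∈ Icc (0:ℝ) 1, GenJHOp S (fun x => (1 - k) • q + k • T x) M n

/-- `M` is `q`-starshaped. -/
def Starshaped (M : Set X) (q : X) : Prop :=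
  q ∈ M ∧ ∀ x ∈ M, segment ℝ q x ⊆ M

def m1 (S T : X → X) (x y : X) : ℝ :=
  max (max ‖S x - S y‖ ‖S x - T x‖)
    (max ‖S y - T y‖ ((‖T x - T y‖ + ‖S y - T x‖) / 2))

def n1 (S T : X → X) (x y : X) : ℝ :=
  max ‖S x - S y‖ (max ‖T x - S x‖ ‖S y - T y‖)

def m2 (S T : X → X) (x y : X) : ℝ :=
  max (max ‖S x - S y‖ ‖S x - T x‖)
    (max ‖S y - T y‖ ((‖S x - T y‖ + ‖S y - T x‖) / 2))

def m3 (S T : X → X) (q x y : X) : ℝ :=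
  max (max ‖S x - S y‖ (Metric.infDist (S x) (segment ℝ q (T x))))
    (max (Metric.infDist (S y) (segment ℝ q (T y)))
      ((Metric.infDist (S x) (segment ℝ q (T y)) +
        Metric.infDist (S y) (segment ℝ q (T x))) / 2))

/-- `Y^{a} = {f_a(k) : k ∈ [0,1]}` for a family `f`. -/
def Yfam (f : X → ℝ → X) (a : X) : Set X := f a '' Icc (0:ℝ) 1

def m4 (f : X → ℝ → X) (S T : X → X) (x y : X) : ℝ :=
  max (max ‖S x - S y‖ (Metric.infDist (S x) (Yfam f (T x))))
    (max (Metric.infDist (S y) (Yfam f (T y)))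
      ((Metric.infDist (S x) (Yfam f (T y)) +
        Metric.infDist (S y) (Yfam f (T x))) / 2))

/-- `ℑ = {f_α}_{α ∈ M}` is a family of functions `[0,1] → M` with `f_α(1) = α`. -/
def FamilyOn (f : X → ℝ → X) (M : Set X) : Prop :=
  (∀ a ∈ M, ∀ t ∈ Icc (0:ℝ) 1, f a t ∈ M) ∧ ∀ a ∈ M, f a 1 = a

/-- The family is contractive with contractiveness function `Φ : (0,1) → (0,1)`. -/
def ContractiveFamily (f : X → ℝ → X) (M : Set X) (Phi : ℝ → ℝ) : Prop :=
  (∀ t ∈ Ioo (0:ℝ) 1, Phi t ∈ Ioo (0:ℝ) 1) ∧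
  ∀ a ∈ M, ∀ b ∈ M, ∀ t ∈ Ioo (0:ℝ) 1, ‖f a t - f b t‖ ≤ Phi t * ‖a - b‖

/-- The family is jointly continuous: `tₙ → t₀` and `αₙ → α₀` imply
`f_{αₙ}(tₙ) → f_{α₀}(t₀)`. -/
def JointlyContinuousFamily (f : X → ℝ → X) (M : Set X) : Prop :=
  ∀ (tn : ℕ → ℝ) (t0 : ℝ), (∀ n, tn n ∈ Icc (0:ℝ) 1) → t0 ∈ Icc (0:ℝ) 1 →
    Tendsto tn atTop (𝓝 t0) →
    ∀ (an : ℕ → X) (a0 : X), (∀ n, an n ∈ M) → a0 ∈ M →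
      Tendsto an atTop (𝓝 a0) →
      Tendsto (fun n => f (an n) (tn n)) atTop (𝓝 (f a0 t0))

/-- `(S,T)` is a generalized JHℑ-suboperator pair with order `n` on `M`:
for each `k ∈ [0,1]`, `(S, T_k)` with `T_k x = f_{Tx}(k)` is a generalized
JH-operator pair with order `n`. -/
def GenJHImSubOp (f : X → ℝ → X) (S T : X → X) (M : Set X) (n : ℕ) : Prop :=
  ∀ k ∈ Icc (0:ℝ) 1, GenJHOp S (fun x => f (T x) k) M n

/-- Weak convergence of a sequence. -/
def WeakTendsTo (x : ℕ → X) (a : X) : Prop :=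
  ∀ f : StrongDual ℝ X, Tendsto (fun n => f (x n)) atTop (𝓝 (f a))

/-- Weak (sequential) closure. -/
def WSeqCl (A : Set X) : Set X := {a | ∃ x : ℕ → X, (∀ n, x n ∈ A) ∧ WeakTendsTo x a}

/-- Weak (sequential) compactness. -/
def WSeqCompact (A : Set X) : Prop :=
  ∀ x : ℕ → X, (∀ n, x n ∈ A) →
    ∃ a ∈ A, ∃ g : ℕ → ℕ, StrictMono g ∧ WeakTendsTo (x ∘ g) a

/-- `T` is completely continuous on `M`: weak convergence implies strong
convergence of images. -/
def CompletelyContinuousOn (T : X → X) (M : Set X) : Prop :=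
  ∀ (x : ℕ → X) (a : X), (∀ n, x n ∈ M) → a ∈ M → WeakTendsTo x a →
    Tendsto (fun n => T (x n)) atTop (𝓝 (T a))

/-- `S` is weakly continuous on `M`. -/
def WeaklyContinuousOn (S : X → X) (M : Set X) : Prop :=
  ∀ (x : ℕ → X) (a : X), (∀ n, x n ∈ M) → a ∈ M → WeakTendsTo x a →
    WeakTendsTo (fun n => S (x n)) (S a)

/-- `G` is demiclosed at `0` on `M`. -/
def DemiclosedAtZero (G : X → X) (M : Set X) : Prop :=
  ∀ (x : ℕ → X) (a : X), (∀ n, x n ∈ M) → a ∈ M → WeakTendsTo x a →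
    Tendsto (fun n => G (x n)) atTop (𝓝 (0 : X)) → G a = 0

/-- `T` is hemicompact on `M`. -/
def Hemicompact (T : X → X) (M : Set X) : Prop :=
  ∀ x : ℕ → X, (∀ n, x n ∈ M) →
    Tendsto (fun n => ‖x n - T (x n)‖) atTop (𝓝 (0 : ℝ)) →
    ∃ (a : X) (g : ℕ → ℕ), StrictMono g ∧ Tendsto (x ∘ g) atTop (𝓝 a)

/-- Opial's condition. -/
def OpialCondition (Y : Type*) [NormedAddCommGroup Y] [NormedSpace ℝ Y] : Prop :=
  ∀ (x : ℕ → Y) (a : Y), WeakTendsTo x a → ∀ y : Y, y ≠ a →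
    liminf (fun n => ‖x n - a‖) atTop < liminf (fun n => ‖x n - y‖) atTop

/-- `P_M(u)`, the set of best approximations to `u` out of `M`. -/
def PMset (M : Set X) (u : X) : Set X := {x ∈ M | ‖x - u‖ = Metric.infDist u M}

/-- `C_M^S(u) = {x ∈ M : Sx ∈ P_M(u)}`. -/
def CMSset (M : Set X) (S : X → X) (u : X) : Set X := {x ∈ M | S x ∈ PMset M u}


theorem intPhi_nonneg {phi : ℝ → ℝ} (hphi : ∀ t ≥ (0:ℝ), 0 ≤ phi t) {a : ℝ} (ha : 0 ≤ a) :
    0 ≤ intPhi phi a :=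
  intervalIntegral.integral_nonneg ha fun t ht => hphi t ht.1

theorem intPhi_monotoneOn {phi : ℝ → ℝ} (hphi : ∀ t ≥ (0:ℝ), 0 ≤ phi t)
    (hint : ∀ b : ℝ, IntervalIntegrable phi volume 0 b) : MonotoneOn (intPhi phi) (Ici 0) := by
  intro a ha b _ hab
  have hsplit : intPhi phi a + ∫ t in a..b, phi t = intPhi phi b :=
    intervalIntegral.integral_add_adjacent_intervals (hint a) ((hint a).symm.trans (hint b))
  have hrest : 0 ≤ ∫ t in a..b, phi t :=
    intervalIntegral.integral_nonneg hab fun t ht => hphi t (le_trans ha ht.1)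
  linarith

theorem AlteringDistance.nonneg {ψ : ℝ → ℝ} (hψ : AlteringDistance ψ) {t : ℝ} (ht : 0 ≤ t) :
    0 ≤ ψ t :=
  ((hψ.2.2 0 le_rfl).2 rfl).symm.le.trans (hψ.1 self_mem_Ici ht ht)

theorem UltraAltering.nonneg {φu : ℝ → ℝ} (hφu : UltraAltering φu) {t : ℝ} (ht : 0 ≤ t) :
    0 ≤ φu t :=
  hφu.2.2.2.trans (hφu.2.1 self_mem_Ici ht ht)

theorem CClassFun.lt_of_le {F : ℝ → ℝ → ℝ} {ψ φu : ℝ → ℝ} (hF : CClassFun F)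
    (hψ : AlteringDistance ψ) (hφu : UltraAltering φu) {u v : ℝ} (hu : 0 < u)
    (h : ψ v ≤ F (ψ u) (φu u)) : v < u := by
  by_contra! huv
  have hψu := hψ.nonneg hu.le
  have hφuu := hφu.nonneg hu.le
  have heq : F (ψ u) (φu u) = ψ u :=
    le_antisymm (hF.2.1 _ hψu _ hφuu) ((hψ.1 hu.le (hu.le.trans huv) huv).trans h)
  rcases hF.2.2 _ hψu _ hφuu heq with h0 | h0
  · exact hu.ne' ((hψ.2.2 u hu.le).1 h0)
  · exact (hφu.2.2.1 u hu).ne' h0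

theorem ContinuousOn.eq_of_tendsto {α β : Type*} [TopologicalSpace α] [TopologicalSpace β]
    [T2Space β] {g : α → β} {M : Set α} (hg : ContinuousOn g M) {x : ℕ → α} {y : α} {z : β}
    (hxM : ∀ n, x n ∈ M) (hy : y ∈ M) (hx : Tendsto x atTop (𝓝 y))
    (hgx : Tendsto (g ∘ x) atTop (𝓝 z)) : g y = z :=
  tendsto_nhds_unique ((hg y hy).tendsto.comp (tendsto_nhdsWithin_iff.2 ⟨hx, .of_forall hxM⟩)) hgx

section

variable {E : Type*} [NormedAddCommGroup E]

theorem m4_eq_norm_of_mem_Yfam {f : E → ℝ → E} {S T : E → E} {x y : E}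
    (hx : S x ∈ Yfam f (T x)) (hy : S y ∈ Yfam f (T y)) : m4 f S T x y = ‖S x - S y‖ := by
  have hxy : Metric.infDist (S x) (Yfam f (T y)) ≤ ‖S x - S y‖ :=
    (Metric.infDist_le_dist_of_mem hy).trans_eq (dist_eq_norm _ _)
  have hyx : Metric.infDist (S y) (Yfam f (T x)) ≤ ‖S x - S y‖ :=
    (Metric.infDist_le_dist_of_mem hx).trans_eq (dist_eq_norm' _ _)
  have hnn := add_nonneg (Metric.infDist_nonneg (x := S x) (s := Yfam f (T y)))
    (Metric.infDist_nonneg (x := S y) (s := Yfam f (T x)))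
  simp only [m4, Metric.infDist_zero_of_mem hx, Metric.infDist_zero_of_mem hy]
  exact le_antisymm (max_le (max_le le_rfl (norm_nonneg _)) (max_le (norm_nonneg _) (by linarith)))
    (le_max_of_le_left (le_max_left _ _))

theorem PCset_subsingleton_of_contractive [NormedSpace ℝ E] {M : Set E} {S T : E → E}
    {f : E → ℝ → E} {Phi phi ψ φu γ : ℝ → ℝ} {F : ℝ → ℝ → ℝ} {k : ℝ} (hk : k ∈ Ioo (0:ℝ) 1)
    (hT : MapsTo T M M) (hcf : ContractiveFamily f M Phi) (hphi : PhiAdmissible phi)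
    (hψ : AlteringDistance ψ) (hφu : UltraAltering φu) (hF : CClassFun F)
    (hγ : GammaAdmissible γ)
    (hcontr : ∀ x ∈ M, ∀ y ∈ M,
      ψ (intPhi phi ‖T x - T y‖) ≤
        F (ψ (intPhi phi ((1 / Phi k) * γ (m4 f S T x y))))
          (φu (intPhi phi ((1 / Phi k) * γ (m4 f S T x y))))) :
    (PCset S (fun x => f (T x) k) M).Subsingleton := by
  rintro _ ⟨x, hx, rfl, hfx⟩ _ ⟨y, hy, rfl, hfy⟩
  by_contra hne
  set d := ‖S x - S y‖
  have hd : 0 < d := norm_pos_iff.2 (sub_ne_zero.2 hne)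
  have hm4 : m4 f S T x y = d :=
    m4_eq_norm_of_mem_Yfam ⟨k, Ioo_subset_Icc_self hk, hfx⟩ ⟨k, Ioo_subset_Icc_self hk, hfy⟩
  have hΦ : 0 < Phi k := (hcf.1 k hk).1
  have hdT : d ≤ Phi k * ‖T x - T y‖ := by
    simpa only [d, ← hfx, ← hfy] using hcf.2 _ (hT hx) _ (hT hy) k hk
  have hlt : (1 / Phi k) * γ d < ‖T x - T y‖ := by
    calc (1 / Phi k) * γ d < (1 / Phi k) * d :=
          mul_lt_mul_of_pos_left (hγ.2.2 d hd) (one_div_pos.2 hΦ)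
      _ ≤ ‖T x - T y‖ := by rw [one_div_mul_eq_div, div_le_iff₀ hΦ]; linarith
  have hpos : 0 < (1 / Phi k) * γ d := mul_pos (one_div_pos.2 hΦ) (hγ.1 d hd)
  have hI := hF.lt_of_le hψ hφu (hphi.2.2 _ hpos) (hm4 ▸ hcontr x hx y hy)
  exact (intPhi_monotoneOn hphi.1 hphi.2.1).reflect_lt (norm_nonneg _) hpos.le hI |>.not_gt hlt

theorem GenJHOp.exists_fixedPoint_of_subsingleton {S T : E → E} {M : Set E} {n : ℕ}
    (h : GenJHOp S T M n) (hn : n ≠ 0) (hPC : (PCset S T M).Subsingleton) :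
    ∃ x ∈ M, S x = x ∧ T x = x := by
  obtain ⟨x, hx, hST, hdist⟩ := h
  rw [Metric.diam_subsingleton hPC, zero_pow hn, norm_le_zero_iff, sub_eq_zero] at hdist
  exact ⟨x, hx, hdist, hST ▸ hdist⟩

theorem exists_common_fixedPoint_of_forall_Ioo {M : Set E} {S T : E → E} {f : E → ℝ → E}
    (hMcl : IsClosed M) (hT : MapsTo T M M) (hf1 : ∀ a ∈ M, f a 1 = a)
    (hjc : JointlyContinuousFamily f M) (hcmp : IsCompact (closure (T '' M)))
    (hScont : ContinuousOn S M) (hTcont : ContinuousOn T M)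
    (happrox : ∀ k ∈ Ioo (0:ℝ) 1, ∃ x ∈ M, S x = x ∧ f (T x) k = x) :
    ∃ x ∈ M, S x = x ∧ T x = x := by
  obtain ⟨k, -, hk01, hk1⟩ := exists_seq_strictMono_tendsto' (zero_lt_one' ℝ)
  choose x hxM hSx hfx using fun n => happrox (k n) (hk01 n)
  obtain ⟨y, hy, g, hg, hTxg⟩ :=
    hcmp.tendsto_subseq fun n => subset_closure (mem_image_of_mem T (hxM n))
  have hyM : y ∈ M := closure_minimal hT.image_subset hMcl hy
  have hxgM : ∀ n, (x ∘ g) n ∈ M := fun n => hxM (g n)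
  have hxg : Tendsto (x ∘ g) atTop (𝓝 y) := by
    have := hjc (k ∘ g) 1 (fun n => Ioo_subset_Icc_self (hk01 _)) (right_mem_Icc.2 zero_le_one)
      (hk1.comp hg.tendsto_atTop) _ y (fun n => hT (hxgM n)) hyM hTxg
    rw [hf1 y hyM] at this
    exact this.congr fun n => hfx (g n)
  exact ⟨y, hyM, hScont.eq_of_tendsto hxgM hyM hxg (hxg.congr fun n => (hSx (g n)).symm),
    hTcont.eq_of_tendsto hxgM hyM hxg hTxg⟩

end

theorem stmt_9_general {X : Type*} [NormedAddCommGroup X] [NormedSpace ℝ X]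
    (M : Set X) (hMcl : IsClosed M) (S T : X → X)
    (hT : MapsTo T M M)
    (f : X → ℝ → X) (Phi : ℝ → ℝ)
    (hfam : FamilyOn f M) (hcf : ContractiveFamily f M Phi)
    (hjc : JointlyContinuousFamily f M)
    (phi ψ φu : ℝ → ℝ) (F : ℝ → ℝ → ℝ)
    (hphi : PhiAdmissible phi) (hψ : AlteringDistance ψ) (hφu : UltraAltering φu)
    (hF : CClassFun F)
    (γ : ℝ → ℝ) (hγ : GammaAdmissible γ)
    (n₀ : ℕ) (hn₀ : 1 ≤ n₀) (hJH : GenJHImSubOp f S T M n₀)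
    (hcontr : ∀ x ∈ M, ∀ y ∈ M, ∀ t ∈ Ioo (0:ℝ) 1,
      ψ (intPhi phi ‖T x - T y‖) ≤
        F (ψ (intPhi phi ((1 / Phi t) * γ (m4 f S T x y))))
          (φu (intPhi phi ((1 / Phi t) * γ (m4 f S T x y)))))
    (hcmp : IsCompact (closure (T '' M)))
    (hScont : ContinuousOn S M) (hTcont : ContinuousOn T M) :
    ∃ x ∈ M, S x = x ∧ T x = x := by
  refine exists_common_fixedPoint_of_forall_Ioo hMcl hT hfam.2 hjc hcmp hScont hTcont
    fun k hk => ?_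
  have hPC : (PCset S (fun x => f (T x) k) M).Subsingleton :=
    PCset_subsingleton_of_contractive hk hT hcf hphi hψ hφu hF hγ
      fun x hx y hy => hcontr x hx y hy k hk
  exact (hJH k (Ioo_subset_Icc_self hk)).exists_fixedPoint_of_subsingleton
    (Nat.one_le_iff_ne_zero.1 hn₀) hPC

theorem stmt_9 {X : Type*} [NormedAddCommGroup X] [NormedSpace ℝ X]
    (M : Set X) (hMcl : IsClosed M) (S T : X → X)
    (hS : MapsTo S M M) (hT : MapsTo T M M) (hSM : S '' M = M)
    (f : X → ℝ → X) (Phi : ℝ → ℝ)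
    (hfam : FamilyOn f M) (hcf : ContractiveFamily f M Phi)
    (hjc : JointlyContinuousFamily f M)
    (phi ψ φu : ℝ → ℝ) (F : ℝ → ℝ → ℝ)
    (hphi : PhiAdmissible phi) (hψ : AlteringDistance ψ) (hφu : UltraAltering φu)
    (hF : CClassFun F) (hmono : MonotoneTriple ψ φu F)
    (γ : ℝ → ℝ) (hγ : GammaAdmissible γ)
    (n₀ : ℕ) (hn₀ : 1 ≤ n₀) (hJH : GenJHImSubOp f S T M n₀)
    (hcontr : ∀ x ∈ M, ∀ y ∈ M, ∀ t ∈ Ioo (0:ℝ) 1,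
      ψ (intPhi phi ‖T x - T y‖) ≤
        F (ψ (intPhi phi ((1 / Phi t) * γ (m4 f S T x y))))
          (φu (intPhi phi ((1 / Phi t) * γ (m4 f S T x y)))))
    (hcmp : IsCompact (closure (T '' M)))
    (hScont : ContinuousOn S M) (hTcont : ContinuousOn T M) :
    ∃ x ∈ M, S x = x ∧ T x = x :=
  stmt_9_general M hMcl S T hT f Phi hfam hcf hjc phi ψ φu F hphi hψ hφu hF γ hγ n₀ hn₀ hJH hcontr
    hcmp hScont hTcont

end
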